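/- With e(y,t) := errfn((y + at)/√(4βt)) − errfn((y − at)/√(4βt)), a ≠ 0, β > 0, there is for each p ∈ [1, ∞] a constant C such that ‖e_{ty}(·, t)‖_{L^p(ℝ)} ≤ C t^{-(1/2)(1 − 1/p) − 1/2} for all t > 0. -/

import Mathlib

/-!
Write `σ = √(4βt)`, `u± = (y ± at)/σ` and `G x = exp (-x²)`. Then `√π e_y = σ⁻¹ (G u₊ - G u₋)`,
and since `∂ₜσ = σ/(2t)`,

  `√π e_ty = -(W u₊ - W u₋) / (2tσ) + a/σ² (G' u₊ + G' u₋)`,  with `W = (x G)' = G + x G'`.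

The two profiles are shifted by `u₊ - u₋ = 2at/σ`, so `W u₊ - W u₋` is an increment of `W` over
that distance: it is at most `(2|a|t/σ) sup |W'|` pointwise and, after rescaling, at most
`2|a|t ‖W'‖₁` in `L¹`. This cancellation gives `‖e_ty‖_∞ ≲ 1/t` and `‖e_ty‖₁ ≲ t^{-1/2}` for all
`t > 0`, and the `Lᵖ` bound follows from `‖f‖_p ≤ ‖f‖_∞^{1-1/p} ‖f‖₁^{1/p}`.
-/

open Real MeasureTheory
open scoped ENNReal

/-- The error-function primitive of the Gaussian. -/
noncomputable def errfn (x : ℝ) : ℝ :=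
  (Real.sqrt Real.pi)⁻¹ * ∫ z in Set.Iic x, Real.exp (-(z ^ 2))

/-- The excited kernel `e(y,t)`. -/
noncomputable def eFn (a β y t : ℝ) : ℝ :=
  errfn ((y + a * t) / Real.sqrt (4 * β * t)) - errfn ((y - a * t) / Real.sqrt (4 * β * t))

open Set
open scoped Interval

section LpInterpolation

variable {α E : Type*} {m : MeasurableSpace α} {μ : Measure α} [NormedAddCommGroup E]

theorem one_div_toReal_le_one_of_one_le {p : ℝ≥0∞} (hp : 1 ≤ p) : 1 / p.toReal ≤ 1 := by
  rcases eq_or_ne p ∞ with rfl | hp_top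
  · simp
  exact div_le_one_of_le₀ (by simpa using ENNReal.toReal_mono hp_top hp) ENNReal.toReal_nonneg

theorem eLpNorm_one_eq_ofReal_integral_norm {f : α → E} (hf : Integrable f μ) :
    eLpNorm f 1 μ = ENNReal.ofReal (∫ x, ‖f x‖ ∂μ) := by
  rw [eLpNorm_one_eq_lintegral_enorm, ofReal_integral_norm_eq_lintegral_enorm hf]

theorem eLpNorm_le_eLpNorm_top_rpow_mul_eLpNorm_one_rpow {f : α → E}
    (hf : AEStronglyMeasurable f μ) {p : ℝ≥0∞} (hp : 1 ≤ p) :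
    eLpNorm f p μ ≤ eLpNorm f ∞ μ ^ (1 - 1 / p.toReal) * eLpNorm f 1 μ ^ (1 / p.toReal) := by
  rcases eq_or_ne p ∞ with rfl | hp_top
  · simp
  have hq : 1 ≤ p.toReal := by simpa using ENNReal.toReal_mono hp_top hp
  rw [eLpNorm_eq_lintegral_rpow_enorm_toReal (by positivity) hp_top,
    eLpNorm_one_eq_lintegral_enorm]
  calc (∫⁻ x, ‖f x‖ₑ ^ p.toReal ∂μ) ^ (1 / p.toReal)
      ≤ (eLpNorm f ∞ μ ^ (p.toReal - 1) * ∫⁻ x, ‖f x‖ₑ ∂μ) ^ (1 / p.toReal) := by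
        gcongr
        rw [← lintegral_const_mul'' _ hf.enorm]
        refine lintegral_mono_ae ?_
        filter_upwards [enorm_ae_le_eLpNormEssSup f μ] with x hx
        calc ‖f x‖ₑ ^ p.toReal = ‖f x‖ₑ ^ (p.toReal - 1) * ‖f x‖ₑ ^ (1 : ℝ) := by
              rw [← ENNReal.rpow_add_of_nonneg _ _ (by linarith) zero_le_one, sub_add_cancel]
          _ ≤ eLpNorm f ∞ μ ^ (p.toReal - 1) * ‖f x‖ₑ := by
              rw [ENNReal.rpow_one, eLpNorm_exponent_top]
              gcongr
    _ = _ := by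
        rw [ENNReal.mul_rpow_of_nonneg _ _ (by positivity), ← ENNReal.rpow_mul]
        congr 2
        field_simp

theorem eLpNorm_le_ofReal_rpow_mul_rpow {f : α → E} (hf : AEStronglyMeasurable f μ)
    {p : ℝ≥0∞} (hp : 1 ≤ p) {A B : ℝ} (hA : 0 ≤ A) (hB : 0 ≤ B)
    (htop : eLpNorm f ∞ μ ≤ ENNReal.ofReal A) (hone : eLpNorm f 1 μ ≤ ENNReal.ofReal B) :
    eLpNorm f p μ ≤ ENNReal.ofReal (A ^ (1 - 1 / p.toReal) * B ^ (1 / p.toReal)) := by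
  have hθ := one_div_toReal_le_one_of_one_le hp
  calc eLpNorm f p μ
      ≤ ENNReal.ofReal A ^ (1 - 1 / p.toReal) * ENNReal.ofReal B ^ (1 / p.toReal) := by
        refine (eLpNorm_le_eLpNorm_top_rpow_mul_eLpNorm_one_rpow hf hp).trans ?_
        gcongr
    _ = _ := by
        rw [ENNReal.ofReal_rpow_of_nonneg hA (by linarith),
          ENNReal.ofReal_rpow_of_nonneg hB (by positivity), ← ENNReal.ofReal_mul (by positivity)]

end LpInterpolation

theorem rpow_mul_rpow_le_add_mul_rpow {A B t θ : ℝ} (hA : 0 ≤ A) (hB : 0 ≤ B) (ht : 0 < t) (hθ₀ : 0 ≤ θ)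
    (hθ₁ : θ ≤ 1) :
    (A * t ^ (-1 : ℝ)) ^ (1 - θ) * (B * t ^ (-(1 / 2) : ℝ)) ^ θ
      ≤ (A + B) * t ^ (-(1 / 2) * (1 - θ) - 1 / 2) := by
  rw [mul_rpow hA (by positivity), mul_rpow hB (by positivity), ← rpow_mul ht.le,
    ← rpow_mul ht.le, mul_mul_mul_comm, ← rpow_add ht,
    show -1 * (1 - θ) + -(1 / 2) * θ = -(1 / 2) * (1 - θ) - 1 / 2 by ring]
  have := geom_mean_le_arith_mean2_weighted (by linarith) hθ₀ hA hB (sub_add_cancel 1 θ)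
  gcongr
  nlinarith

section RealLine

variable {E : Type*} [NormedAddCommGroup E]

theorem eLpNorm_comp_add_div (φ : ℝ → E) (p : ℝ≥0∞) (h : ℝ) {σ : ℝ} (hσ : 0 < σ) :
    eLpNorm (fun y => φ ((y + h) / σ)) p volume
      = ENNReal.ofReal σ ^ (1 / p).toReal * eLpNorm φ p volume := by
  have hshift := (measurableEmbedding_addRight h).eLpNorm_map_measure
    (g := fun y => φ (y / σ)) (p := p) (μ := volume)
  have hscale := (measurableEmbedding_mulRight₀ (inv_ne_zero hσ.ne')).eLpNorm_map_measure
    (g := φ) (p := p) (μ := volume)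
  rw [(measurePreserving_add_right volume h).map_eq] at hshift
  rw [Real.map_volume_mul_right (inv_ne_zero hσ.ne'), inv_inv, abs_of_pos hσ,
    eLpNorm_smul_measure_of_ne_zero (by simpa using hσ)] at hscale
  simp only [Function.comp_def, ← div_eq_mul_inv] at hshift hscale
  rw [← hshift, ← hscale, smul_eq_mul]

theorem eLpNorm_one_comp_add_div {φ : ℝ → E} (hφ : Integrable φ) (h : ℝ) {σ : ℝ} (hσ : 0 < σ) :
    eLpNorm (fun y => φ ((y + h) / σ)) 1 volume = ENNReal.ofReal (σ * ∫ x, ‖φ x‖) := by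
  rw [eLpNorm_comp_add_div φ 1 h hσ, eLpNorm_one_eq_ofReal_integral_norm hφ,
    ENNReal.ofReal_mul hσ.le]
  simp

variable [NormedSpace ℝ E] [CompleteSpace E] {φ φ' : ℝ → E}

theorem apply_add_sub_apply_sub_eq_integral (hφ : ∀ x, HasDerivAt φ (φ' x) x)
    (hφ' : Continuous φ') (x k : ℝ) :
    φ (x + k) - φ (x - k) = ∫ s in (-k)..k, φ' (x + s) := by
  rw [intervalIntegral.integral_eq_sub_of_hasDerivAt (f := fun s => φ (x + s))
    (fun s _ => (hφ (x + s)).comp_const_add x s)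
    ((hφ'.comp (continuous_const_add x)).intervalIntegrable _ _), sub_eq_add_neg x k]

theorem eLpNorm_one_apply_add_sub_apply_sub_le (hφ : ∀ x, HasDerivAt φ (φ' x) x)
    (hφ' : Continuous φ') (k : ℝ) :
    eLpNorm (fun x => φ (x + k) - φ (x - k)) 1 volume
      ≤ ENNReal.ofReal (2 * |k|) * eLpNorm φ' 1 volume := by
  simp only [eLpNorm_one_eq_lintegral_enorm, apply_add_sub_apply_sub_eq_integral hφ hφ']
  calc ∫⁻ x, ‖∫ s in (-k)..k, φ' (x + s)‖ₑ
      ≤ ∫⁻ x, ∫⁻ s in Ι (-k) k, ‖φ' (x + s)‖ₑ := by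
        refine lintegral_mono fun x => ?_
        rw [← ofReal_norm, intervalIntegral.norm_integral_eq_norm_integral_uIoc, ofReal_norm]
        exact enorm_integral_le_lintegral_enorm _
    _ = ∫⁻ s in Ι (-k) k, ∫⁻ x, ‖φ' (x + s)‖ₑ :=
        lintegral_lintegral_swap (by fun_prop)
    _ = ENNReal.ofReal (2 * |k|) * ∫⁻ x, ‖φ' x‖ₑ := by
        rw [setLIntegral_congr_fun measurableSet_uIoc
          (fun s _ => lintegral_add_right_eq_self (fun x => ‖φ' x‖ₑ) s), setLIntegral_const,
          Real.volume_uIoc, sub_neg_eq_add, ← two_mul, abs_mul, abs_two, mul_comm]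

theorem eLpNorm_one_apply_add_div_sub_apply_sub_div_le (hφ : ∀ x, HasDerivAt φ (φ' x) x)
    (hφ' : Continuous φ') (h : ℝ) {σ : ℝ} (hσ : 0 < σ) :
    eLpNorm (fun y => φ ((y + h) / σ) - φ ((y - h) / σ)) 1 volume
      ≤ ENNReal.ofReal (2 * |h|) * eLpNorm φ' 1 volume := by
  calc eLpNorm (fun y => φ ((y + h) / σ) - φ ((y - h) / σ)) 1 volume
      = eLpNorm (fun y => (fun x => φ (x + h / σ) - φ (x - h / σ)) ((y + 0) / σ)) 1 volume := by
        simp only [add_zero, add_div, sub_div]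
    _ ≤ ENNReal.ofReal σ * (ENNReal.ofReal (2 * |h / σ|) * eLpNorm φ' 1 volume) := by
        rw [eLpNorm_comp_add_div (fun x => φ (x + h / σ) - φ (x - h / σ)) 1 0 hσ]
        simpa using mul_le_mul_right (eLpNorm_one_apply_add_sub_apply_sub_le hφ hφ' (h / σ)) _
    _ = ENNReal.ofReal (2 * |h|) * eLpNorm φ' 1 volume := by
        rw [← mul_assoc, ← ENNReal.ofReal_mul hσ.le, abs_div, abs_of_pos hσ]
        congr 2
        field_simp

theorem hasDerivAt_integral_Iic {f : ℝ → E} (hf : Continuous f) (hfi : Integrable f) (x : ℝ) :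
    HasDerivAt (fun x => ∫ z in Iic x, f z) (f x) x := by
  have hsplit : (fun x => ∫ z in Iic x, f z)
      = fun x => (∫ z in Iic 0, f z) + ∫ z in (0)..x, f z := by
    ext w
    rw [← intervalIntegral.integral_Iic_sub_Iic hfi.integrableOn hfi.integrableOn, add_sub_cancel]
  rw [hsplit]
  exact (hf.integral_hasStrictDerivAt 0 x).hasDerivAt.const_add _

end RealLine

theorem hasDerivAt_errfn (x : ℝ) : HasDerivAt errfn ((√π)⁻¹ * exp (-x ^ 2)) x :=
  (hasDerivAt_integral_Iic (by fun_prop)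
    (by simpa using integrable_exp_neg_mul_sq one_pos) x).const_mul _

/-- The `φ u + u φ' u` term comes from `∂ₛ √(4βs) = √(4βs) / (2s)`. -/
theorem hasDerivAt_selfSimilar {φ φ' : ℝ → ℝ} (hφ : ∀ x, HasDerivAt φ (φ' x) x) {β t : ℝ}
    (hβ : 0 < β) (ht : 0 < t) (y c : ℝ) :
    HasDerivAt (fun s => (√(4 * β * s))⁻¹ * φ ((y + c * s) / √(4 * β * s)))
      (-(φ ((y + c * t) / √(4 * β * t))
            + (y + c * t) / √(4 * β * t) * φ' ((y + c * t) / √(4 * β * t)))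
          / (2 * t * √(4 * β * t))
        + c / (4 * β * t) * φ' ((y + c * t) / √(4 * β * t))) t := by
  have hσ : 0 < √(4 * β * t) := by positivity
  have hσ' : HasDerivAt (fun s => √(4 * β * s)) (2 * β / √(4 * β * t)) t :=
    (((hasDerivAt_id' t).const_mul (4 * β)).sqrt (by positivity)).congr_deriv
      (by field_simp; norm_num)
  have hu := (((hasDerivAt_id' t).const_mul c).const_add y).fun_div hσ' hσ.ne'
  refine ((hσ'.fun_inv hσ.ne').fun_mul ((hφ _).comp t hu)).congr_deriv ?_
  have hσsq : √(4 * β * t) ^ 2 = 4 * β * t := sq_sqrt (by positivity)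
  rw [Function.comp_apply]
  set σ := √(4 * β * t)
  field_simp
  rw [hσsq]
  ring

noncomputable def gaussianDeriv (x : ℝ) : ℝ := -2 * x * exp (-x ^ 2)

/-- `(x e^{-x²})'`, the derivative at `λ = 1` of the mass-preserving dilation `λ e^{-(λx)²}`. -/
noncomputable def gaussianDilation (x : ℝ) : ℝ := exp (-x ^ 2) + x * gaussianDeriv x

noncomputable def gaussianDilationDeriv (x : ℝ) : ℝ := (4 * x ^ 3 - 6 * x) * exp (-x ^ 2)

theorem hasDerivAt_exp_neg_sq (x : ℝ) :
    HasDerivAt (fun x => exp (-x ^ 2)) (gaussianDeriv x) x :=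
  ((hasDerivAt_pow 2 x).fun_neg.exp).congr_deriv (by simp only [gaussianDeriv]; ring)

theorem hasDerivAt_gaussianDeriv (x : ℝ) :
    HasDerivAt gaussianDeriv ((4 * x ^ 2 - 2) * exp (-x ^ 2)) x :=
  (((hasDerivAt_id' x).const_mul (-2)).fun_mul (hasDerivAt_exp_neg_sq x)).congr_deriv
    (by simp only [gaussianDeriv]; ring)

theorem hasDerivAt_gaussianDilation (x : ℝ) :
    HasDerivAt gaussianDilation (gaussianDilationDeriv x) x :=
  ((hasDerivAt_exp_neg_sq x).fun_add
    ((hasDerivAt_id' x).fun_mul (hasDerivAt_gaussianDeriv x))).congr_deriv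
    (by simp only [gaussianDilationDeriv, gaussianDeriv]; ring)

@[fun_prop]
theorem continuous_gaussianDeriv : Continuous gaussianDeriv := by
  unfold gaussianDeriv; fun_prop

@[fun_prop]
theorem continuous_gaussianDilation : Continuous gaussianDilation := by
  unfold gaussianDilation; fun_prop

@[fun_prop]
theorem continuous_gaussianDilationDeriv : Continuous gaussianDilationDeriv := by
  unfold gaussianDilationDeriv; fun_prop

theorem abs_pow_mul_exp_neg_sq_le (n : ℕ) (x : ℝ) :
    |x ^ n * exp (-x ^ 2)| ≤ n.factorial + 1 := by
  have hpow : |x| ^ n ≤ 1 + (x ^ 2) ^ n := by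
    rcases le_total |x| 1 with hx | hx
    · linarith [pow_le_one₀ (abs_nonneg x) hx (n := n), pow_nonneg (sq_nonneg x) n]
    · calc |x| ^ n ≤ |x| ^ (2 * n) := pow_le_pow_right₀ hx (by omega)
        _ ≤ 1 + (x ^ 2) ^ n := by rw [pow_mul, sq_abs]; linarith
  have hexp : (x ^ 2) ^ n ≤ n.factorial * exp (x ^ 2) := by
    have := pow_div_factorial_le_exp (x := x ^ 2) (sq_nonneg x) n
    rwa [div_le_iff₀ (by positivity), mul_comm] at this
  have hle : exp (-x ^ 2) ≤ 1 := exp_le_one_iff.2 (by nlinarith)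
  rw [abs_mul, abs_pow, abs_of_pos (exp_pos _)]
  calc |x| ^ n * exp (-x ^ 2) ≤ (1 + n.factorial * exp (x ^ 2)) * exp (-x ^ 2) := by
        gcongr; linarith
    _ = exp (-x ^ 2) + n.factorial := by rw [add_mul, mul_assoc, ← exp_add]; simp
    _ ≤ n.factorial + 1 := by linarith

theorem integrable_pow_mul_exp_neg_sq (n : ℕ) :
    Integrable fun x : ℝ => x ^ n * exp (-x ^ 2) := by
  simpa using integrable_rpow_mul_exp_neg_mul_sq one_pos (s := n)
    (by linarith [n.cast_nonneg (α := ℝ)])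

theorem gaussianDeriv_eq_pow_mul_exp (x : ℝ) :
    gaussianDeriv x = -2 * (x ^ 1 * exp (-x ^ 2)) := by
  rw [gaussianDeriv, pow_one, mul_assoc]

theorem gaussianDilationDeriv_eq_pow_mul_exp (x : ℝ) :
    gaussianDilationDeriv x = 4 * (x ^ 3 * exp (-x ^ 2)) - 6 * (x ^ 1 * exp (-x ^ 2)) := by
  rw [gaussianDilationDeriv]; ring

theorem abs_gaussianDeriv_le (x : ℝ) : |gaussianDeriv x| ≤ 4 := by
  have := abs_pow_mul_exp_neg_sq_le 1 x
  rw [gaussianDeriv_eq_pow_mul_exp, abs_mul]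
  norm_num at this ⊢
  linarith

theorem abs_gaussianDilationDeriv_le (x : ℝ) : |gaussianDilationDeriv x| ≤ 40 := by
  have h1 := abs_pow_mul_exp_neg_sq_le 1 x
  have h3 := abs_pow_mul_exp_neg_sq_le 3 x
  rw [gaussianDilationDeriv_eq_pow_mul_exp]
  refine (abs_sub _ _).trans ?_
  rw [abs_mul, abs_mul]
  norm_num [Nat.factorial] at h1 h3 ⊢
  linarith

theorem integrable_gaussianDeriv : Integrable gaussianDeriv := by
  rw [funext gaussianDeriv_eq_pow_mul_exp]
  exact (integrable_pow_mul_exp_neg_sq 1).const_mul (-2)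

theorem integrable_gaussianDilationDeriv : Integrable gaussianDilationDeriv := by
  rw [funext gaussianDilationDeriv_eq_pow_mul_exp]
  exact ((integrable_pow_mul_exp_neg_sq 3).const_mul 4).sub
    ((integrable_pow_mul_exp_neg_sq 1).const_mul 6)

noncomputable def eFnMixedDeriv (a β t y : ℝ) : ℝ :=
  (√π)⁻¹ * (-(gaussianDilation ((y + a * t) / √(4 * β * t))
      - gaussianDilation ((y - a * t) / √(4 * β * t))) / (2 * t * √(4 * β * t))
    + a / (4 * β * t) * (gaussianDeriv ((y + a * t) / √(4 * β * t))
      + gaussianDeriv ((y - a * t) / √(4 * β * t))))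

@[fun_prop]
theorem continuous_eFnMixedDeriv (a β t : ℝ) : Continuous (eFnMixedDeriv a β t) := by
  unfold eFnMixedDeriv; fun_prop

theorem deriv_eFn_space (a β s y : ℝ) :
    deriv (fun z => eFn a β z s) y = (√π)⁻¹ *
      ((√(4 * β * s))⁻¹ * exp (-((y + a * s) / √(4 * β * s)) ^ 2)
        - (√(4 * β * s))⁻¹ * exp (-((y - a * s) / √(4 * β * s)) ^ 2)) := by
  have hlin (c : ℝ) : HasDerivAt (fun z => (z + c) / √(4 * β * s)) (√(4 * β * s))⁻¹ y :=
    ((hasDerivAt_id' y).add_const c).div_const _ |>.congr_deriv (one_div _)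
  refine (((hasDerivAt_errfn _).comp y (hlin (a * s))).fun_sub
    ((hasDerivAt_errfn _).comp y (hlin (-(a * s))))).deriv.trans ?_
  simp only [← sub_eq_add_neg]
  ring

theorem deriv_deriv_eFn (a β : ℝ) (hβ : 0 < β) {t : ℝ} (ht : 0 < t) (y : ℝ) :
    deriv (fun s => deriv (fun z => eFn a β z s) y) t = eFnMixedDeriv a β t y := by
  have hplus := hasDerivAt_selfSimilar hasDerivAt_exp_neg_sq hβ ht y a
  have hminus := hasDerivAt_selfSimilar hasDerivAt_exp_neg_sq hβ ht y (-a)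
  simp only [neg_mul, ← sub_eq_add_neg] at hminus
  rw [funext fun s => deriv_eFn_space a β s y, ((hplus.fun_sub hminus).const_mul _).deriv]
  simp only [eFnMixedDeriv, gaussianDilation]
  ring

theorem abs_eFnMixedDeriv_le (a : ℝ) {β t : ℝ} (hβ : 0 < β) (ht : 0 < t) (y : ℝ) :
    |eFnMixedDeriv a β t y| ≤ 12 * |a| / (√π * β) * t ^ (-1 : ℝ) := by
  unfold eFnMixedDeriv
  have hσ : 0 < √(4 * β * t) := by positivity
  have hσsq : √(4 * β * t) ^ 2 = 4 * β * t := sq_sqrt (by positivity)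
  set σ := √(4 * β * t)
  set Wd := gaussianDilation ((y + a * t) / σ) - gaussianDilation ((y - a * t) / σ)
  set Gs := gaussianDeriv ((y + a * t) / σ) + gaussianDeriv ((y - a * t) / σ)
  have hW : |Wd| ≤ 40 * (2 * |a| * t / σ) := by
    have := Convex.norm_image_sub_le_of_norm_hasDerivWithin_le
      (fun x _ => (hasDerivAt_gaussianDilation x).hasDerivWithinAt)
      (fun x _ => abs_gaussianDilationDeriv_le x) convex_univ
      (mem_univ ((y - a * t) / σ)) (mem_univ ((y + a * t) / σ))
    rwa [Real.norm_eq_abs, Real.norm_eq_abs, ← sub_div, abs_div, abs_of_pos hσ,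
      show y + a * t - (y - a * t) = 2 * a * t by ring, abs_mul, abs_mul, abs_two,
      abs_of_pos ht] at this
  have hG : |Gs| ≤ 8 := by
    have := abs_gaussianDeriv_le ((y + a * t) / σ)
    have := abs_gaussianDeriv_le ((y - a * t) / σ)
    linarith [abs_add_le (gaussianDeriv ((y + a * t) / σ)) (gaussianDeriv ((y - a * t) / σ))]
  rw [abs_mul, abs_inv, abs_of_pos (sqrt_pos.2 pi_pos)]
  calc (√π)⁻¹ * |-Wd / (2 * t * σ) + a / (4 * β * t) * Gs|
      ≤ (√π)⁻¹ * (|Wd| / (2 * t * σ) + |a| / (4 * β * t) * |Gs|) := by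
        gcongr
        refine (abs_add_le _ _).trans (le_of_eq ?_)
        rw [abs_div, abs_neg, abs_of_pos (by positivity : 0 < 2 * t * σ), abs_mul, abs_div,
          abs_of_pos (by positivity : 0 < 4 * β * t)]
    _ ≤ (√π)⁻¹ * (40 * (2 * |a| * t / σ) / (2 * t * σ) + |a| / (4 * β * t) * 8) := by
        gcongr
    _ = 12 * |a| / (√π * β) * t ^ (-1 : ℝ) := by
        rw [rpow_neg_one]
        field_simp
        rw [hσsq]
        ring

theorem eLpNorm_top_eFnMixedDeriv_le (a : ℝ) {β t : ℝ} (hβ : 0 < β) (ht : 0 < t) :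
    eLpNorm (eFnMixedDeriv a β t) ∞ volume
      ≤ ENNReal.ofReal (12 * |a| / (√π * β) * t ^ (-1 : ℝ)) := by
  rw [eLpNorm_exponent_top]
  exact eLpNormEssSup_le_of_ae_bound (ae_of_all _ (abs_eFnMixedDeriv_le a hβ ht))

theorem eLpNorm_one_eFnMixedDeriv_le_div_sqrt (a : ℝ) {β t : ℝ} (hβ : 0 < β) (ht : 0 < t) :
    eLpNorm (eFnMixedDeriv a β t) 1 volume
      ≤ ENNReal.ofReal ((√π)⁻¹ * |a| * ((∫ x, ‖gaussianDilationDeriv x‖)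
          + 2 * ∫ x, ‖gaussianDeriv x‖) / √(4 * β * t)) := by
  have hσ : 0 < √(4 * β * t) := by positivity
  have hσsq : √(4 * β * t) ^ 2 = 4 * β * t := sq_sqrt (by positivity)
  set σ := √(4 * β * t)
  set D := fun y => gaussianDilation ((y + a * t) / σ) - gaussianDilation ((y - a * t) / σ)
  set Gp := fun y => gaussianDeriv ((y + a * t) / σ)
  set Gm := fun y => gaussianDeriv ((y - a * t) / σ)
  have hD : eLpNorm D 1 volume ≤ ENNReal.ofReal (2 * |a * t| * ∫ x, ‖gaussianDilationDeriv x‖) :=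
    (eLpNorm_one_apply_add_div_sub_apply_sub_div_le hasDerivAt_gaussianDilation
      continuous_gaussianDilationDeriv _ hσ).trans_eq (by
        rw [eLpNorm_one_eq_ofReal_integral_norm integrable_gaussianDilationDeriv,
          ← ENNReal.ofReal_mul (by positivity)])
  have hGm : eLpNorm Gm 1 volume = ENNReal.ofReal (σ * ∫ x, ‖gaussianDeriv x‖) := by
    simpa only [← sub_eq_add_neg] using
      eLpNorm_one_comp_add_div integrable_gaussianDeriv (-(a * t)) hσ
  have hfun : eFnMixedDeriv a β t
      = (√π)⁻¹ • ((-(2 * t * σ)⁻¹) • D + (a / (4 * β * t)) • (Gp + Gm)) := by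
    ext y
    simp only [eFnMixedDeriv, D, Gp, Gm, Pi.smul_apply, Pi.add_apply, smul_eq_mul]
    ring
  calc eLpNorm (eFnMixedDeriv a β t) 1 volume
      ≤ ‖(√π)⁻¹‖ₑ * (‖-(2 * t * σ)⁻¹‖ₑ * eLpNorm D 1 volume
          + ‖a / (4 * β * t)‖ₑ * (eLpNorm Gp 1 volume + eLpNorm Gm 1 volume)) := by
        rw [hfun, eLpNorm_const_smul]
        gcongr
        refine (eLpNorm_add_le (by fun_prop) (by fun_prop) le_rfl).trans ?_
        rw [eLpNorm_const_smul, eLpNorm_const_smul]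
        gcongr
        exact eLpNorm_add_le (by fun_prop) (by fun_prop) le_rfl
    _ ≤ _ := by
        rw [eLpNorm_one_comp_add_div integrable_gaussianDeriv _ hσ, hGm]
        grw [hD]
        simp only [Real.enorm_eq_ofReal_abs]
        simp (disch := positivity) only [← ENNReal.ofReal_mul, ← ENNReal.ofReal_add]
        refine ENNReal.ofReal_le_ofReal (le_of_eq ?_)
        simp only [abs_inv, abs_neg, abs_div, abs_mul, abs_of_pos ht, abs_of_pos hβ,
          abs_of_pos hσ, abs_of_pos (sqrt_pos.2 pi_pos)]
        field_simp
        rw [hσsq]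
        ring

theorem eLpNorm_one_eFnMixedDeriv_le (a : ℝ) {β t : ℝ} (hβ : 0 < β) (ht : 0 < t) :
    eLpNorm (eFnMixedDeriv a β t) 1 volume
      ≤ ENNReal.ofReal ((√π)⁻¹ * |a| * ((∫ x, ‖gaussianDilationDeriv x‖)
          + 2 * ∫ x, ‖gaussianDeriv x‖) / √(4 * β) * t ^ (-(1 / 2) : ℝ)) := by
  convert eLpNorm_one_eFnMixedDeriv_le_div_sqrt a hβ ht using 2
  rw [sqrt_mul (by positivity) t, rpow_neg ht.le, ← sqrt_eq_rpow, ← div_eq_mul_inv, div_div]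

theorem stmt3 (a β : ℝ) (ha : a ≠ 0) (hβ : 0 < β) (p : ℝ≥0∞) (hp : 1 ≤ p) :
    ∃ C : ℝ, 0 < C ∧ ∀ t : ℝ, 0 < t →
      eLpNorm (fun y => deriv (fun s => deriv (fun z => eFn a β z s) y) t) p volume
        ≤ ENNReal.ofReal (C * t ^ (-(1 / 2) * (1 - 1 / p.toReal) - 1 / 2)) := by
  refine ⟨12 * |a| / (√π * β) + (√π)⁻¹ * |a| * ((∫ x, ‖gaussianDilationDeriv x‖)
      + 2 * ∫ x, ‖gaussianDeriv x‖) / √(4 * β), by positivity, fun t ht => ?_⟩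
  simp only [deriv_deriv_eFn a β hβ ht]
  refine (eLpNorm_le_ofReal_rpow_mul_rpow (continuous_eFnMixedDeriv a β t).aestronglyMeasurable
    hp (by positivity) (by positivity) (eLpNorm_top_eFnMixedDeriv_le a hβ ht)
    (eLpNorm_one_eFnMixedDeriv_le a hβ ht)).trans ?_
  exact ENNReal.ofReal_le_ofReal (rpow_mul_rpow_le_add_mul_rpow (by positivity) (by positivity) ht
    (by positivity) (one_div_toReal_le_one_of_one_le hp))
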